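/- arXiv:2012.14725 — 3 statements merged into one kernel-verified Lean document; each statement's English description precedes it below -/
import Mathlib

section
/- Let M = φK_θ ⊕ ψK_θ be an orthogonal direct sum in L²(𝕋) with θ inner and φ, ψ unimodular. The antilinear operator C_M defined on L² by C_M f = θφψ z̄ f̄ is a conjugation on L² (an antilinear isometric involution), and C_M maps M into M. -/
open MeasureTheory Complex Submodule

noncomputable section

namespace DualBand

/-- Haar (normalized Lebesgue) measure on the unit circle, realized additively. -/
abbrev μ : Measure UnitAddCircle := AddCircle.haarAddCircle

/-- The Lebesgue space L² of the unit circle. -/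
abbrev L2 : Type := Lp ℂ 2 μ

lemma mul_memLp (φ : UnitAddCircle →ₘ[μ] ℂ) (hφ : ∀ᵐ x ∂μ, ‖φ x‖ = 1) (f : L2) :
    MemLp (fun x => φ x * f x) 2 μ := by
  refine ⟨φ.aestronglyMeasurable.mul (Lp.aestronglyMeasurable f), ?_⟩
  have h : eLpNorm (fun x => φ x * f x) 2 μ = eLpNorm f 2 μ := by
    refine eLpNorm_congr_norm_ae ?_
    filter_upwards [hφ] with x hx
    simp [norm_mul, hx]
  rw [h]
  exact Lp.eLpNorm_lt_top f

/-- Multiplication by an a.e. unimodular measurable function, as a linear map on L². -/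
def mulOp (φ : UnitAddCircle →ₘ[μ] ℂ) (hφ : ∀ᵐ x ∂μ, ‖φ x‖ = 1) : L2 →ₗ[ℂ] L2 where
  toFun f := (mul_memLp φ hφ f).toLp _
  map_add' f g := by
    refine Lp.ext ?_
    filter_upwards [MemLp.coeFn_toLp (mul_memLp φ hφ (f + g)),
      MemLp.coeFn_toLp (mul_memLp φ hφ f), MemLp.coeFn_toLp (mul_memLp φ hφ g),
      Lp.coeFn_add f g,
      Lp.coeFn_add ((mul_memLp φ hφ f).toLp _) ((mul_memLp φ hφ g).toLp _)]
      with x h1 h2 h3 h4 h5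
    rw [h1, h5, Pi.add_apply, h2, h3, h4, Pi.add_apply]
    ring
  map_smul' c f := by
    refine Lp.ext ?_
    filter_upwards [MemLp.coeFn_toLp (mul_memLp φ hφ (c • f)),
      MemLp.coeFn_toLp (mul_memLp φ hφ f),
      Lp.coeFn_smul c f,
      Lp.coeFn_smul c ((mul_memLp φ hφ f).toLp _)]
      with x h1 h2 h3 h4
    rw [h1, RingHom.id_apply, h4, Pi.smul_apply, h2, h3, Pi.smul_apply]
    simp [smul_eq_mul]
    ring

/-- Complex conjugation of an a.e.-defined function. -/
def conjAE (φ : UnitAddCircle →ₘ[μ] ℂ) : UnitAddCircle →ₘ[μ] ℂ :=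
  AEEqFun.comp (starRingEnd ℂ) RCLike.continuous_conj φ

lemma conj_memLp (f : L2) : MemLp (fun x => (starRingEnd ℂ) (f x)) 2 μ := by
  refine ⟨RCLike.continuous_conj.comp_aestronglyMeasurable (Lp.aestronglyMeasurable f), ?_⟩
  have h : eLpNorm (fun x => (starRingEnd ℂ) (f x)) 2 μ = eLpNorm f 2 μ :=
    eLpNorm_congr_norm_ae (Filter.Eventually.of_forall fun x => by simp)
  rw [h]
  exact Lp.eLpNorm_lt_top f

/-- Pointwise complex conjugation on L². -/
def conjL2 (f : L2) : L2 := (conj_memLp f).toLp _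

/-- The conjugate z̄ of the coordinate function, as an a.e.-defined function. -/
def zbar : UnitAddCircle →ₘ[μ] ℂ :=
  AEEqFun.mk (⇑(fourier (T := 1) (-1)))
    ((fourier (T := 1) (-1)).continuous.aestronglyMeasurable)

/-- The Hardy space H² inside L², as the closed span of the nonnegative Fourier modes. -/
def H2 : Submodule ℂ L2 :=
  (Submodule.span ℂ (Set.range fun n : ℕ => (fourierLp 2 (n : ℤ) : L2))).topologicalClosure

/-- The model space K_θ = H² ⊖ θH². -/
def modelSpace (θ : UnitAddCircle →ₘ[μ] ℂ) (hθ : ∀ᵐ x ∂μ, ‖θ x‖ = 1) : Submodule ℂ L2 :=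
  H2 ⊓ (H2.map (mulOp θ hθ))ᗮ

lemma modelSpace_isClosed (θ : UnitAddCircle →ₘ[μ] ℂ) (hθ : ∀ᵐ x ∂μ, ‖θ x‖ = 1) :
    IsClosed ((modelSpace θ hθ : Set L2)) := by
  have h1 : (modelSpace θ hθ : Set L2)
      = (H2 : Set L2) ∩ ((H2.map (mulOp θ hθ))ᗮ : Set L2) := rfl
  rw [h1]
  exact (Submodule.isClosed_topologicalClosure _).inter
    (Submodule.isClosed_orthogonal (H2.map (mulOp θ hθ)))

instance (θ : UnitAddCircle →ₘ[μ] ℂ) (hθ : ∀ᵐ x ∂μ, ‖θ x‖ = 1) :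
    CompleteSpace (modelSpace θ hθ) :=
  (modelSpace_isClosed θ hθ).completeSpace_coe

/-!
Apart from pointwise identities for unimodular functions, the content is `C_θ K_θ ⊆ K_θ` for
`C_θ f = θ z̄ f̄`. On Fourier modes `f ↦ z̄ f̄` sends `e_n` to `e_{-n-1}`, so it exchanges `H²` and
`(H²)ᗮ`; hence `C_θ` maps `(H²)ᗮ` into `θH²` and `θH²` into `(H²)ᗮ`. Since
`⟪f, C_θ g⟫ = conj ⟪C_θ f, g⟫`, the two conditions `f ∈ H²`, `f ⊥ θH²` defining `K_θ` are swapped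
by `C_θ`.
-/

open scoped InnerProductSpace ComplexConjugate

lemma ae_norm_mul_eq_one {u v : UnitAddCircle →ₘ[μ] ℂ} (hu : ∀ᵐ x ∂μ, ‖u x‖ = 1)
    (hv : ∀ᵐ x ∂μ, ‖v x‖ = 1) : ∀ᵐ x ∂μ, ‖(u * v) x‖ = 1 := by
  filter_upwards [AEEqFun.coeFn_mul u v, hu, hv] with x huv hux hvx
  rw [huv, Pi.mul_apply, norm_mul, hux, hvx, mul_one]

lemma conj_mul_self_of_norm_eq_one {z : ℂ} (h : ‖z‖ = 1) : conj z * z = 1 := by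
  rw [RCLike.conj_mul, h]
  norm_num

lemma coeFn_mulOp (u : UnitAddCircle →ₘ[μ] ℂ) (hu : ∀ᵐ x ∂μ, ‖u x‖ = 1) (f : L2) :
    mulOp u hu f =ᵐ[μ] fun x => u x * f x :=
  (mul_memLp u hu f).coeFn_toLp

lemma coeFn_conjL2 (f : L2) : conjL2 f =ᵐ[μ] fun x => conj (f x) :=
  (conj_memLp f).coeFn_toLp

lemma conjL2_add (f g : L2) : conjL2 (f + g) = conjL2 f + conjL2 g := by
  refine Lp.ext ?_
  filter_upwards [coeFn_conjL2 (f + g), coeFn_conjL2 f, coeFn_conjL2 g, Lp.coeFn_add f g,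
    Lp.coeFn_add (conjL2 f) (conjL2 g)] with x h h₁ h₂ hfg hfg'
  rw [h, hfg', Pi.add_apply, h₁, h₂, hfg, Pi.add_apply, map_add]

lemma conjL2_smul (c : ℂ) (f : L2) : conjL2 (c • f) = conj c • conjL2 f := by
  refine Lp.ext ?_
  filter_upwards [coeFn_conjL2 (c • f), coeFn_conjL2 f, Lp.coeFn_smul c f,
    Lp.coeFn_smul (conj c) (conjL2 f)] with x h h₁ hcf hcf'
  rw [h, hcf', Pi.smul_apply, h₁, hcf, Pi.smul_apply, smul_eq_mul, smul_eq_mul, map_mul]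

/-- For `u = θ z̄` this is the conjugation `C_θ` of `K_θ`, for `u = θφψz̄` it is `C_M`. -/
def conjMul (u : UnitAddCircle →ₘ[μ] ℂ) (hu : ∀ᵐ x ∂μ, ‖u x‖ = 1) : L2 →ₗ⋆[ℂ] L2 where
  toFun f := mulOp u hu (conjL2 f)
  map_add' f g := by rw [conjL2_add, map_add]
  map_smul' c f := by rw [conjL2_smul, map_smul]

section conjMul

variable {u v w : UnitAddCircle →ₘ[μ] ℂ} (hu : ∀ᵐ x ∂μ, ‖u x‖ = 1)
  (hv : ∀ᵐ x ∂μ, ‖v x‖ = 1) (hw : ∀ᵐ x ∂μ, ‖w x‖ = 1)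

lemma coeFn_conjMul (f : L2) : conjMul u hu f =ᵐ[μ] fun x => u x * conj (f x) := by
  filter_upwards [coeFn_mulOp u hu (conjL2 f), coeFn_conjL2 f] with x h₁ h₂
  rw [conjMul, LinearMap.coe_mk, AddHom.coe_mk, h₁, h₂]

lemma conjMul_conjMul (f : L2) : conjMul u hu (conjMul u hu f) = f := by
  refine Lp.ext ?_
  filter_upwards [coeFn_conjMul hu (conjMul u hu f), coeFn_conjMul hu f, hu] with x h₁ h₂ hux
  rw [h₁, h₂, map_mul, Complex.conj_conj, ← mul_assoc, mul_comm (u x),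
    conj_mul_self_of_norm_eq_one hux, one_mul]

lemma inner_conjMul_conjMul (f g : L2) : ⟪conjMul u hu f, conjMul u hu g⟫_ℂ = ⟪g, f⟫_ℂ := by
  rw [L2.inner_def, L2.inner_def]
  refine integral_congr_ae ?_
  filter_upwards [coeFn_conjMul hu f, coeFn_conjMul hu g, hu] with x hf hg hux
  rw [hf, hg, RCLike.inner_apply, RCLike.inner_apply, map_mul, Complex.conj_conj]
  linear_combination (f x * conj (g x)) * conj_mul_self_of_norm_eq_one hux

lemma inner_conjMul_right (f g : L2) : ⟪f, conjMul u hu g⟫_ℂ = conj ⟪conjMul u hu f, g⟫_ℂ := by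
  conv_lhs => rw [← conjMul_conjMul hu f]
  rw [inner_conjMul_conjMul, inner_conj_symm]

lemma conjMul_mulOp (h : u = v * w) (f : L2) :
    conjMul u hu (mulOp v hv f) = conjMul w hw f := by
  subst h
  refine Lp.ext ?_
  filter_upwards [coeFn_conjMul hu (mulOp v hv f), coeFn_conjMul hw f, coeFn_mulOp v hv f,
    AEEqFun.coeFn_mul v w, hv] with x h₁ h₂ h₃ hvw hvx
  rw [h₁, h₂, h₃, hvw, Pi.mul_apply, map_mul]
  linear_combination (w x * conj (f x)) * conj_mul_self_of_norm_eq_one hvx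

lemma conjMul_eq_mulOp_conjMul (h : u = v * w) (f : L2) :
    conjMul u hu f = mulOp v hv (conjMul w hw f) := by
  subst h
  refine Lp.ext ?_
  filter_upwards [coeFn_conjMul hu f, coeFn_mulOp v hv (conjMul w hw f), coeFn_conjMul hw f,
    AEEqFun.coeFn_mul v w] with x h₁ h₂ h₃ hvw
  rw [h₁, h₂, h₃, hvw, Pi.mul_apply, mul_assoc]

end conjMul

instance : CompleteSpace H2 := (Submodule.isClosed_topologicalClosure _).completeSpace_coe

lemma fourierLp_mem_H2 {n : ℤ} (hn : 0 ≤ n) : (fourierLp 2 n : L2) ∈ H2 := by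
  lift n to ℕ using hn
  exact Submodule.le_topologicalClosure _ (Submodule.subset_span ⟨n, rfl⟩)

lemma mem_orthogonal_H2 {f : L2} (hf : ∀ n : ℕ, ⟪(fourierLp 2 n : L2), f⟫_ℂ = 0) :
    f ∈ H2ᗮ := by
  rw [H2, Submodule.orthogonal_closure, ← Submodule.span_singleton_le_iff_mem,
    ← Submodule.isOrtho_iff_le, Submodule.isOrtho_comm, Submodule.isOrtho_span]
  rintro _ ⟨n, rfl⟩ _ hv
  rw [Set.mem_singleton_iff.mp hv]
  exact hf n

lemma fourierLp_mem_orthogonal_H2 {n : ℤ} (hn : n < 0) : (fourierLp 2 n : L2) ∈ H2ᗮ :=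
  mem_orthogonal_H2 fun m => orthonormal_fourier.2 (by omega)

lemma mem_H2_of_inner_fourierLp_eq_zero {f : L2}
    (hf : ∀ n : ℤ, n < 0 → ⟪(fourierLp 2 n : L2), f⟫_ℂ = 0) : f ∈ H2 := by
  rw [← Submodule.orthogonal_orthogonal H2, Submodule.mem_orthogonal]
  intro g hg
  -- Parseval in the Fourier basis; in each term one of the two coefficients vanishes
  rw [← fourierBasis.repr.inner_map_map, lp.inner_eq_tsum]
  refine (tsum_congr fun n => ?_).trans tsum_zero
  rw [fourierBasis.repr_apply_apply, fourierBasis.repr_apply_apply, coe_fourierBasis]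
  rcases lt_or_ge n 0 with hn | hn
  · rw [hf n hn, inner_zero_right]
  · rw [Submodule.inner_right_of_mem_orthogonal (fourierLp_mem_H2 hn) hg, inner_zero_left]

lemma coeFn_zbar : zbar =ᵐ[μ] fourier (T := 1) (-1) := AEEqFun.coeFn_mk _ _

lemma ae_norm_zbar : ∀ᵐ x ∂μ, ‖zbar x‖ = 1 := by
  filter_upwards [coeFn_zbar] with x hx
  rw [hx, fourier_apply, Circle.norm_coe]

lemma conjMul_zbar_fourierLp (n : ℤ) :
    conjMul zbar ae_norm_zbar (fourierLp 2 n) = fourierLp 2 (-n - 1) := by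
  refine Lp.ext ?_
  filter_upwards [coeFn_conjMul ae_norm_zbar (fourierLp 2 n), coeFn_zbar,
    coeFn_fourierLp (T := 1) 2 n, coeFn_fourierLp (T := 1) 2 (-n - 1)] with x h₁ hz h₂ h₃
  rw [h₁, hz, h₂, h₃, ← fourier_neg, ← fourier_add, neg_add_eq_sub]

lemma conjMul_zbar_mem_orthogonal_H2 {f : L2} (hf : f ∈ H2) :
    conjMul zbar ae_norm_zbar f ∈ H2ᗮ := by
  refine mem_orthogonal_H2 fun n => ?_
  rw [inner_conjMul_right, conjMul_zbar_fourierLp,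
    Submodule.inner_left_of_mem_orthogonal hf (fourierLp_mem_orthogonal_H2 (by omega)), map_zero]

lemma conjMul_zbar_mem_H2 {f : L2} (hf : f ∈ H2ᗮ) : conjMul zbar ae_norm_zbar f ∈ H2 := by
  refine mem_H2_of_inner_fourierLp_eq_zero fun n hn => ?_
  rw [inner_conjMul_right, conjMul_zbar_fourierLp,
    Submodule.inner_right_of_mem_orthogonal (fourierLp_mem_H2 (by omega)) hf, map_zero]

lemma conjMul_mem_modelSpace {θ : UnitAddCircle →ₘ[μ] ℂ} (hθ : ∀ᵐ x ∂μ, ‖θ x‖ = 1)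
    {f : L2} (hf : f ∈ modelSpace θ hθ) :
    conjMul (θ * zbar) (ae_norm_mul_eq_one hθ ae_norm_zbar) f ∈ modelSpace θ hθ := by
  obtain ⟨hfH2, hfθ⟩ := Submodule.mem_inf.mp hf
  refine Submodule.mem_inf.mpr ⟨?_, ?_⟩
  · rw [← Submodule.orthogonal_orthogonal H2, Submodule.mem_orthogonal]
    intro g hg
    have hCg : conjMul (θ * zbar) (ae_norm_mul_eq_one hθ ae_norm_zbar) g ∈
        H2.map (mulOp θ hθ) := by
      rw [conjMul_eq_mulOp_conjMul _ hθ ae_norm_zbar rfl]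
      exact Submodule.mem_map_of_mem (conjMul_zbar_mem_H2 hg)
    rw [inner_conjMul_right, Submodule.inner_right_of_mem_orthogonal hCg hfθ, map_zero]
  · rw [Submodule.mem_orthogonal]
    rintro _ ⟨h, hh, rfl⟩
    rw [inner_conjMul_right, conjMul_mulOp _ hθ ae_norm_zbar rfl,
      Submodule.inner_left_of_mem_orthogonal hfH2 (conjMul_zbar_mem_orthogonal_H2 hh), map_zero]

theorem statement2_general (θ φ ψ : UnitAddCircle →ₘ[μ] ℂ)
    (hθu : ∀ᵐ x ∂μ, ‖θ x‖ = 1)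
    (hφ : ∀ᵐ x ∂μ, ‖φ x‖ = 1) (hψ : ∀ᵐ x ∂μ, ‖ψ x‖ = 1)
    (hprod : ∀ᵐ x ∂μ, ‖(θ * φ * ψ * zbar) x‖ = 1) :
    -- C_M is antilinear
    (∀ f g : L2, mulOp (θ * φ * ψ * zbar) hprod (conjL2 (f + g))
        = mulOp (θ * φ * ψ * zbar) hprod (conjL2 f)
          + mulOp (θ * φ * ψ * zbar) hprod (conjL2 g)) ∧
    (∀ (c : ℂ) (f : L2), mulOp (θ * φ * ψ * zbar) hprod (conjL2 (c • f))
        = (starRingEnd ℂ c) • mulOp (θ * φ * ψ * zbar) hprod (conjL2 f)) ∧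
    -- C_M is an involution
    (∀ f : L2, mulOp (θ * φ * ψ * zbar) hprod
        (conjL2 (mulOp (θ * φ * ψ * zbar) hprod (conjL2 f))) = f) ∧
    -- C_M is "isometric": ⟨C_M f, C_M g⟩ = ⟨g, f⟩
    (∀ f g : L2, inner (𝕜 := ℂ) (mulOp (θ * φ * ψ * zbar) hprod (conjL2 f))
        (mulOp (θ * φ * ψ * zbar) hprod (conjL2 g)) = inner (𝕜 := ℂ) g f) ∧
    -- C_M preserves M = φK_θ ⊕ ψK_θ
    (∀ f : L2, (∃ k₁ ∈ modelSpace θ hθu, ∃ k₂ ∈ modelSpace θ hθu,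
          f = mulOp φ hφ k₁ + mulOp ψ hψ k₂) →
      (∃ k₁ ∈ modelSpace θ hθu, ∃ k₂ ∈ modelSpace θ hθu,
          mulOp (θ * φ * ψ * zbar) hprod (conjL2 f) = mulOp φ hφ k₁ + mulOp ψ hψ k₂)) := by
  set C := conjMul (θ * φ * ψ * zbar) hprod
  have hθz := ae_norm_mul_eq_one hθu ae_norm_zbar
  refine ⟨map_add C, map_smulₛₗ C, conjMul_conjMul hprod, inner_conjMul_conjMul hprod, ?_⟩
  rintro _ ⟨k₁, hk₁, k₂, hk₂, rfl⟩
  refine ⟨conjMul (θ * zbar) hθz k₂, conjMul_mem_modelSpace hθu hk₂,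
    conjMul (θ * zbar) hθz k₁, conjMul_mem_modelSpace hθu hk₁, ?_⟩
  -- `θφψz̄ (φk₁ + ψk₂)‾ = ψ · θz̄ k̄₁ + φ · θz̄ k̄₂`, since `φφ̄ = ψψ̄ = 1`
  have hC₁ : C (mulOp φ hφ k₁) = mulOp ψ hψ (conjMul (θ * zbar) hθz k₁) := by
    rw [conjMul_mulOp hprod hφ (ae_norm_mul_eq_one hψ hθz) (by ac_rfl),
      conjMul_eq_mulOp_conjMul _ hψ hθz rfl]
  have hC₂ : C (mulOp ψ hψ k₂) = mulOp φ hφ (conjMul (θ * zbar) hθz k₂) := by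
    rw [conjMul_mulOp hprod hψ (ae_norm_mul_eq_one hφ hθz) (by ac_rfl),
      conjMul_eq_mulOp_conjMul _ hφ hθz rfl]
  change C _ = _
  rw [map_add, hC₁, hC₂, add_comm]

/-- Let M = φK_θ ⊕ ψK_θ be an orthogonal direct sum in L² with θ inner and
φ, ψ unimodular.  The antilinear operator C_M f = θφψz̄f̄ is a conjugation on L²
(an antilinear isometric involution) and it maps M into M. -/
theorem statement2 (θ φ ψ : UnitAddCircle →ₘ[μ] ℂ)
    (hθu : ∀ᵐ x ∂μ, ‖θ x‖ = 1)
    (hθinner : ∀ f ∈ H2, mulOp θ hθu f ∈ H2)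
    (hφ : ∀ᵐ x ∂μ, ‖φ x‖ = 1) (hψ : ∀ᵐ x ∂μ, ‖ψ x‖ = 1)
    (horth : ((modelSpace θ hθu).map (mulOp φ hφ)) ⟂ ((modelSpace θ hθu).map (mulOp ψ hψ)))
    (hprod : ∀ᵐ x ∂μ, ‖(θ * φ * ψ * zbar) x‖ = 1) :
    -- C_M is antilinear
    (∀ f g : L2, mulOp (θ * φ * ψ * zbar) hprod (conjL2 (f + g))
        = mulOp (θ * φ * ψ * zbar) hprod (conjL2 f)
          + mulOp (θ * φ * ψ * zbar) hprod (conjL2 g)) ∧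
    (∀ (c : ℂ) (f : L2), mulOp (θ * φ * ψ * zbar) hprod (conjL2 (c • f))
        = (starRingEnd ℂ c) • mulOp (θ * φ * ψ * zbar) hprod (conjL2 f)) ∧
    -- C_M is an involution
    (∀ f : L2, mulOp (θ * φ * ψ * zbar) hprod
        (conjL2 (mulOp (θ * φ * ψ * zbar) hprod (conjL2 f))) = f) ∧
    -- C_M is "isometric": ⟨C_M f, C_M g⟩ = ⟨g, f⟩
    (∀ f g : L2, inner (𝕜 := ℂ) (mulOp (θ * φ * ψ * zbar) hprod (conjL2 f))
        (mulOp (θ * φ * ψ * zbar) hprod (conjL2 g)) = inner (𝕜 := ℂ) g f) ∧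
    -- C_M preserves M = φK_θ ⊕ ψK_θ
    (∀ f : L2, (∃ k₁ ∈ modelSpace θ hθu, ∃ k₂ ∈ modelSpace θ hθu,
          f = mulOp φ hφ k₁ + mulOp ψ hψ k₂) →
      (∃ k₁ ∈ modelSpace θ hθu, ∃ k₂ ∈ modelSpace θ hθu,
          mulOp (θ * φ * ψ * zbar) hprod (conjL2 f) = mulOp φ hφ k₁ + mulOp ψ hψ k₂)) :=
  statement2_general θ φ ψ hθu hφ hψ hprod

end DualBand
end
end

section
/- Let θ be an inner function, λ ∈ 𝕋, and suppose there exist a ∈ ℂ with |a| = 1 and h ∈ H² with θ(z) − a = (z − λ)h(z) on 𝔻. Then θ has nontangential limit a at λ; that is, θ(z) → a as z → λ nontangentially in 𝔻. -/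
/-!
On the Stolz region `‖z - λ‖ ≤ C (1 - ‖z‖)` the factor `z - λ` is of size `1 - ‖z‖`, while an
`H²` function grows at most like `(1 - ‖z‖²)^(-1/2)` by Cauchy–Schwarz against the geometric
series. Hence `‖(z - λ) h(z)‖² ≲ ‖z - λ‖`, so `θ(z) - a = (z - λ) h(z) → 0` nontangentially.
-/

open Filter Topology

theorem summable_mul_and_tsum_mul_sq_le {ι : Type*} {f g : ι → ℝ} (hf : ∀ i, 0 ≤ f i)
    (hg : ∀ i, 0 ≤ g i) (hf2 : Summable fun i => f i ^ 2) (hg2 : Summable fun i => g i ^ 2) :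
    Summable (fun i => f i * g i) ∧
      (∑' i, f i * g i) ^ 2 ≤ (∑' i, f i ^ 2) * ∑' i, g i ^ 2 := by
  simp only [← Real.rpow_two] at hf2 hg2
  obtain ⟨hfg, hle⟩ := Real.summable_and_inner_le_Lp_mul_Lq_tsum_of_nonneg
    Real.HolderConjugate.two_two hf hg hf2 hg2
  simp only [Real.rpow_two, ← Real.sqrt_eq_rpow] at hle
  refine ⟨hfg, ?_⟩
  calc (∑' i, f i * g i) ^ 2 ≤ (√(∑' i, f i ^ 2) * √(∑' i, g i ^ 2)) ^ 2 :=
        pow_le_pow_left₀ (tsum_nonneg fun i => mul_nonneg (hf i) (hg i)) hle 2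
    _ = (∑' i, f i ^ 2) * ∑' i, g i ^ 2 := by
        rw [mul_pow, Real.sq_sqrt (tsum_nonneg fun i => sq_nonneg _),
          Real.sq_sqrt (tsum_nonneg fun i => sq_nonneg _)]

theorem norm_tsum_mul_pow_sq_mul_le {b : ℕ → ℂ} (hb : Summable fun n => ‖b n‖ ^ 2) {z : ℂ}
    (hz : ‖z‖ < 1) : ‖∑' n, b n * z ^ n‖ ^ 2 * (1 - ‖z‖ ^ 2) ≤ ∑' n, ‖b n‖ ^ 2 := by
  have hz2 : ‖z‖ ^ 2 < 1 := by nlinarith [norm_nonneg z]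
  have hgeo : HasSum (fun n : ℕ => (‖z‖ ^ n) ^ 2) (1 - ‖z‖ ^ 2)⁻¹ := by
    convert hasSum_geometric_of_lt_one (sq_nonneg ‖z‖) hz2 using 2 with n
    exact pow_right_comm _ _ _
  obtain ⟨hsum, hcs⟩ := summable_mul_and_tsum_mul_sq_le (fun n => norm_nonneg (b n))
    (fun n => pow_nonneg (norm_nonneg z) n) hb hgeo.summable
  have hnorm : ‖∑' n, b n * z ^ n‖ ≤ ∑' n, ‖b n‖ * ‖z‖ ^ n := by
    simpa only [norm_mul, norm_pow] using
      norm_tsum_le_tsum_norm (f := fun n => b n * z ^ n) (by simpa only [norm_mul, norm_pow])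
  rw [hgeo.tsum_eq] at hcs
  have h1 : 0 < 1 - ‖z‖ ^ 2 := by linarith
  calc ‖∑' n, b n * z ^ n‖ ^ 2 * (1 - ‖z‖ ^ 2)
      ≤ (∑' n, ‖b n‖ ^ 2) * (1 - ‖z‖ ^ 2)⁻¹ * (1 - ‖z‖ ^ 2) := by
        gcongr
        exact (pow_le_pow_left₀ (norm_nonneg _) hnorm 2).trans hcs
    _ = ∑' n, ‖b n‖ ^ 2 := by field_simp

def stolzRegion (lam : ℂ) (C : ℝ) : Set ℂ := {z | ‖z‖ < 1 ∧ ‖z - lam‖ ≤ C * (1 - ‖z‖)}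

theorem norm_sub_mul_sq_le_of_mem_stolzRegion {g : ℂ → ℂ} {M : ℝ}
    (hg : ∀ z : ℂ, ‖z‖ < 1 → ‖g z‖ ^ 2 * (1 - ‖z‖ ^ 2) ≤ M) {lam z : ℂ} {C : ℝ}
    (hz : z ∈ stolzRegion lam C) : ‖(z - lam) * g z‖ ^ 2 ≤ C * M * ‖z - lam‖ := by
  obtain ⟨hz1, hzC⟩ := hz
  have hr : 1 - ‖z‖ ≤ 1 - ‖z‖ ^ 2 := by nlinarith [norm_nonneg z]
  have hC : 0 ≤ C := nonneg_of_mul_nonneg_left ((norm_nonneg _).trans hzC) (by linarith)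
  calc ‖(z - lam) * g z‖ ^ 2 = ‖z - lam‖ * (‖z - lam‖ * ‖g z‖ ^ 2) := by rw [norm_mul]; ring
    _ ≤ ‖z - lam‖ * (C * (1 - ‖z‖ ^ 2) * ‖g z‖ ^ 2) := by
        gcongr
        exact hzC.trans (mul_le_mul_of_nonneg_left hr hC)
    _ = C * ‖z - lam‖ * (‖g z‖ ^ 2 * (1 - ‖z‖ ^ 2)) := by ring
    _ ≤ C * ‖z - lam‖ * M := by gcongr; exact hg z hz1
    _ = C * M * ‖z - lam‖ := by ring

theorem tendsto_sub_mul_nhdsWithin_stolzRegion {g : ℂ → ℂ} {M : ℝ}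
    (hg : ∀ z : ℂ, ‖z‖ < 1 → ‖g z‖ ^ 2 * (1 - ‖z‖ ^ 2) ≤ M) (lam : ℂ) (C : ℝ) :
    Tendsto (fun z => (z - lam) * g z) (𝓝[stolzRegion lam C] lam) (𝓝 0) := by
  rw [tendsto_zero_iff_norm_tendsto_zero]
  have hbound : Tendsto (fun z : ℂ => √(C * M * ‖z - lam‖)) (𝓝[stolzRegion lam C] lam) (𝓝 0) := by
    have : Continuous fun z : ℂ => √(C * M * ‖z - lam‖) := by fun_prop
    simpa using (this.tendsto lam).mono_left nhdsWithin_le_nhds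
  refine squeeze_zero' (Eventually.of_forall fun z => norm_nonneg _)
    (eventually_nhdsWithin_of_forall fun z hz => ?_) hbound
  exact Real.le_sqrt_of_sq_le (norm_sub_mul_sq_le_of_mem_stolzRegion hg hz)

theorem statement9_general (θ : ℂ → ℂ)
    (lam : ℂ)
    (a : ℂ)
    (b : ℕ → ℂ) (hb : Summable fun n => ‖b n‖ ^ 2)
    (h : ℂ → ℂ) (hh : ∀ z : ℂ, ‖z‖ < 1 → h z = ∑' n : ℕ, b n * z ^ n)
    (hfact : ∀ z : ℂ, ‖z‖ < 1 → θ z - a = (z - lam) * h z) :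
    ∀ C : ℝ, 0 < C →
      Tendsto θ (nhdsWithin lam {z : ℂ | ‖z‖ < 1 ∧ ‖z - lam‖ ≤ C * (1 - ‖z‖)}) (nhds a) := by
  intro C _
  have hh2 (z : ℂ) (hz : ‖z‖ < 1) : ‖h z‖ ^ 2 * (1 - ‖z‖ ^ 2) ≤ ∑' n, ‖b n‖ ^ 2 :=
    hh z hz ▸ norm_tsum_mul_pow_sq_mul_le hb hz
  have hlim := (tendsto_sub_mul_nhdsWithin_stolzRegion hh2 lam C).const_add a
  rw [add_zero] at hlim
  refine hlim.congr' (eventually_nhdsWithin_of_forall fun z hz => ?_)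
  rw [← hfact z hz.1, add_sub_cancel]

/-- Let θ be inner (holomorphic and bounded by 1 on 𝔻), λ ∈ 𝕋, and suppose
there are a ∈ ℂ with |a| = 1 and h ∈ H² (square-summable Taylor coefficients `b`) with
θ(z) − a = (z − λ)h(z) on 𝔻.  Then θ(z) → a as z → λ nontangentially in 𝔻. -/
theorem statement9 (θ : ℂ → ℂ)
    (hθan : DifferentiableOn ℂ θ (Metric.ball (0 : ℂ) 1))
    (hθb : ∀ z : ℂ, ‖z‖ < 1 → ‖θ z‖ ≤ 1)
    (lam : ℂ) (hlam : ‖lam‖ = 1)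
    (a : ℂ) (ha : ‖a‖ = 1)
    (b : ℕ → ℂ) (hb : Summable fun n => ‖b n‖ ^ 2)
    (h : ℂ → ℂ) (hh : ∀ z : ℂ, ‖z‖ < 1 → h z = ∑' n : ℕ, b n * z ^ n)
    (hfact : ∀ z : ℂ, ‖z‖ < 1 → θ z - a = (z - lam) * h z) :
    ∀ C : ℝ, 0 < C →
      Tendsto θ (nhdsWithin lam {z : ℂ | ‖z‖ < 1 ∧ ‖z - lam‖ ≤ C * (1 - ‖z‖)}) (nhds a) :=
  statement9_general θ lam a b hb h hh hfact
end

section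
/- Let X, X̃, Y, Ỹ be Banach spaces and T : X → X̃, S : Y → Ỹ bounded operators equivalent after extension. Then T is invertible if and only if S is invertible, and T is Fredholm if and only if S is Fredholm, in which case they have equal Fredholm index. -/
open Module

/-- A bounded operator between Banach spaces is Fredholm if it has finite-dimensional kernel,
closed range and finite-dimensional cokernel. -/
def IsFredholmOp {X Y : Type*}
    [NormedAddCommGroup X] [NormedSpace ℂ X] [NormedAddCommGroup Y] [NormedSpace ℂ Y]
    (T : X →L[ℂ] Y) : Prop :=
  FiniteDimensional ℂ (LinearMap.ker (T : X →ₗ[ℂ] Y)) ∧ IsClosed (LinearMap.range (T : X →ₗ[ℂ] Y) : Set Y) ∧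
    FiniteDimensional ℂ (Y ⧸ LinearMap.range (T : X →ₗ[ℂ] Y))

/-- The Fredholm index: dim ker − dim coker. -/
noncomputable def fredholmIndex {X Y : Type*}
    [NormedAddCommGroup X] [NormedSpace ℂ X] [NormedAddCommGroup Y] [NormedSpace ℂ Y]
    (T : X →L[ℂ] Y) : ℤ :=
  (finrank ℂ (LinearMap.ker (T : X →ₗ[ℂ] Y)) : ℤ) - (finrank ℂ (Y ⧸ LinearMap.range (T : X →ₗ[ℂ] Y)) : ℤ)

/-! Adding an identity summand, and composing with isomorphisms on either side, changes neither
the kernel nor the cokernel up to isomorphism, nor whether the range is closed, nor whether the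
operator has a bounded two-sided inverse. -/

namespace LinearMap

variable {R M N P M' N' : Type*} [Ring R] [AddCommGroup M] [Module R M]
  [AddCommGroup N] [Module R N] [AddCommGroup P] [Module R P]
  [AddCommGroup M'] [Module R M'] [AddCommGroup N'] [Module R N']

noncomputable def kerProdMapIdEquiv (f : M →ₗ[R] N) :
    ker (f.prodMap (id : P →ₗ[R] P)) ≃ₗ[R] ker f :=
  (LinearEquiv.ofEq _ _ (by rw [ker_prodMap, ker_id, ← Submodule.map_inl])).trans
    (Submodule.equivMapOfInjective _ (inl_injective (R := R) (M := M) (M₂ := P)) (ker f)).symm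

noncomputable def quotRangeProdMapIdEquiv (f : M →ₗ[R] N) :
    ((N × P) ⧸ range (f.prodMap (id : P →ₗ[R] P))) ≃ₗ[R] N ⧸ range f :=
  (Submodule.quotEquivOfEq _ _ (by
      rw [range_prodMap, range_id, ker_comp, Submodule.ker_mkQ, Submodule.comap_fst])).trans
    (((range f).mkQ ∘ₗ fst R N P).quotKerEquivOfSurjective
      ((Submodule.mkQ_surjective _).comp Prod.fst_surjective))

noncomputable def kerEquivOfEqEquivComp {f : M →ₗ[R] N} {g : M' →ₗ[R] N'}
    (e₁ : N' ≃ₗ[R] N) (e₂ : M ≃ₗ[R] M') (h : f = e₁ ∘ₗ g ∘ₗ e₂) : ker f ≃ₗ[R] ker g :=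
  (LinearEquiv.ofEq _ _ (by rw [h, LinearEquiv.ker_comp, ker_comp])).trans
    (e₂.ofSubmodule' (ker g))

noncomputable def quotRangeEquivOfEqEquivComp {f : M →ₗ[R] N} {g : M' →ₗ[R] N'}
    (e₁ : N' ≃ₗ[R] N) (e₂ : M ≃ₗ[R] M') (h : f = e₁ ∘ₗ g ∘ₗ e₂) :
    (N ⧸ range f) ≃ₗ[R] N' ⧸ range g :=
  (Submodule.Quotient.equiv _ _ e₁ (by
    rw [h, range_comp, range_comp_of_range_eq_top _ e₂.range])).symm

variable {Q Q' : Type*} [AddCommGroup Q] [Module R Q] [AddCommGroup Q'] [Module R Q']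

noncomputable def kerEquivOfProdMapIdEq {f : M →ₗ[R] N} {g : M' →ₗ[R] N'}
    (e₁ : (N' × Q') ≃ₗ[R] N × Q) (e₂ : (M × Q) ≃ₗ[R] M' × Q')
    (h : f.prodMap (id : Q →ₗ[R] Q) =
      e₁.toLinearMap ∘ₗ g.prodMap (id : Q' →ₗ[R] Q') ∘ₗ e₂.toLinearMap) :
    ker f ≃ₗ[R] ker g :=
  (kerProdMapIdEquiv (P := Q) f).symm ≪≫ₗ kerEquivOfEqEquivComp e₁ e₂ h ≪≫ₗ
    kerProdMapIdEquiv (P := Q') g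

noncomputable def quotRangeEquivOfProdMapIdEq {f : M →ₗ[R] N} {g : M' →ₗ[R] N'}
    (e₁ : (N' × Q') ≃ₗ[R] N × Q) (e₂ : (M × Q) ≃ₗ[R] M' × Q')
    (h : f.prodMap (id : Q →ₗ[R] Q) =
      e₁.toLinearMap ∘ₗ g.prodMap (id : Q' →ₗ[R] Q') ∘ₗ e₂.toLinearMap) :
    (N ⧸ range f) ≃ₗ[R] N' ⧸ range g :=
  (quotRangeProdMapIdEquiv (P := Q) f).symm ≪≫ₗ quotRangeEquivOfEqEquivComp e₁ e₂ h ≪≫ₗ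
    quotRangeProdMapIdEquiv (P := Q') g

end LinearMap

open Topology in
theorem isClosed_prod_univ_iff {β γ : Type*} [TopologicalSpace β] [TopologicalSpace γ]
    [Nonempty γ] {s : Set β} : IsClosed (s ×ˢ (Set.univ : Set γ)) ↔ IsClosed s := by
  rw [Set.prod_univ, isQuotientMap_fst.isClosed_preimage]

theorem isClosed_range_iff_of_prodMap_id_eq {α β γ α' β' γ' : Type*} [TopologicalSpace β]
    [TopologicalSpace γ] [TopologicalSpace β'] [TopologicalSpace γ'] [Nonempty γ] [Nonempty γ']
    {f : α → β} {g : α' → β'} (e₁ : β' × γ' ≃ₜ β × γ) (e₂ : α × γ ≃ α' × γ')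
    (h : Prod.map f id = e₁ ∘ Prod.map g id ∘ e₂) :
    IsClosed (Set.range f) ↔ IsClosed (Set.range g) := by
  have hrange : Set.range f ×ˢ (Set.univ : Set γ) = e₁ '' (Set.range g ×ˢ Set.univ) := by
    rw [← Set.range_id, ← Set.range_prodMap, h, Set.range_comp, Set.range_comp,
      e₂.range_eq_univ, Set.image_univ, Set.range_prodMap, Set.range_id]
  rw [← isClosed_prod_univ_iff (γ := γ), hrange, e₁.isClosed_image, isClosed_prod_univ_iff]

namespace ContinuousLinearMap

variable {R M N P : Type*} [Semiring R] [TopologicalSpace M] [AddCommMonoid M] [Module R M]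
  [TopologicalSpace N] [AddCommMonoid N] [Module R N] [TopologicalSpace P] [AddCommMonoid P]
  [Module R P]

theorem isInvertible_iff_exists_inverse {f : M →L[R] N} :
    f.IsInvertible ↔ ∃ g : N →L[R] M, g ∘L f = .id R M ∧ f ∘L g = .id R N := by
  refine ⟨?_, fun ⟨g, hgf, hfg⟩ ↦ .of_inverse hfg hgf⟩
  rintro ⟨e, rfl⟩
  exact ⟨e.symm, e.coe_symm_comp_coe, e.coe_comp_coe_symm⟩

theorem isInvertible_prodMap_id_iff {f : M →L[R] N} :
    (f.prodMap (.id R P)).IsInvertible ↔ f.IsInvertible := by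
  refine ⟨?_, fun ⟨e, he⟩ ↦ ⟨e.prodCongr (.refl R P), by rw [← he]; rfl⟩⟩
  rintro ⟨e, he⟩
  have he_apply (v : M × P) : e v = (f v.1, v.2) := DFunLike.congr_fun he v
  refine .of_inverse (g := fst R M P ∘L (e.symm : N × P →L[R] M × P) ∘L inl R N P) ?_ ?_
  · ext y
    exact congrArg Prod.fst ((he_apply _).symm.trans (e.apply_symm_apply (y, 0)))
  · ext x
    have : ((f x, 0) : N × P) = e (x, 0) := (he_apply (x, 0)).symm
    simp [this]

end ContinuousLinearMap

section Fredholm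

variable {X Xt Y Yt : Type*}
  [NormedAddCommGroup X] [NormedSpace ℂ X] [NormedAddCommGroup Xt] [NormedSpace ℂ Xt]
  [NormedAddCommGroup Y] [NormedSpace ℂ Y] [NormedAddCommGroup Yt] [NormedSpace ℂ Yt]
  {T : X →L[ℂ] Xt} {S : Y →L[ℂ] Yt}

theorem isFredholmOp_iff_of_linearEquiv
    (eKer : LinearMap.ker (T : X →ₗ[ℂ] Xt) ≃ₗ[ℂ] LinearMap.ker (S : Y →ₗ[ℂ] Yt))
    (eCoker :
      (Xt ⧸ LinearMap.range (T : X →ₗ[ℂ] Xt)) ≃ₗ[ℂ] Yt ⧸ LinearMap.range (S : Y →ₗ[ℂ] Yt))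
    (hClosed : IsClosed (Set.range T) ↔ IsClosed (Set.range S)) :
    IsFredholmOp T ↔ IsFredholmOp S := by
  simp only [IsFredholmOp, LinearMap.coe_range, ContinuousLinearMap.coe_coe]
  exact and_congr (Module.Finite.equiv_iff eKer)
    (and_congr hClosed (Module.Finite.equiv_iff eCoker))

theorem fredholmIndex_eq_of_linearEquiv
    (eKer : LinearMap.ker (T : X →ₗ[ℂ] Xt) ≃ₗ[ℂ] LinearMap.ker (S : Y →ₗ[ℂ] Yt))
    (eCoker :
      (Xt ⧸ LinearMap.range (T : X →ₗ[ℂ] Xt)) ≃ₗ[ℂ] Yt ⧸ LinearMap.range (S : Y →ₗ[ℂ] Yt)) :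
    fredholmIndex T = fredholmIndex S := by
  rw [fredholmIndex, fredholmIndex, eKer.finrank_eq, eCoker.finrank_eq]

end Fredholm

theorem statement14_general
    {X Xt Y Yt X0 Y0 : Type*}
    [NormedAddCommGroup X] [NormedSpace ℂ X]
    [NormedAddCommGroup Xt] [NormedSpace ℂ Xt]
    [NormedAddCommGroup Y] [NormedSpace ℂ Y]
    [NormedAddCommGroup Yt] [NormedSpace ℂ Yt]
    [NormedAddCommGroup X0] [NormedSpace ℂ X0]
    [NormedAddCommGroup Y0] [NormedSpace ℂ Y0]
    (T : X →L[ℂ] Xt) (S : Y →L[ℂ] Yt)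
    (E : (Yt × Y0) ≃L[ℂ] (Xt × X0)) (F : (X × X0) ≃L[ℂ] (Y × Y0))
    (heq : T.prodMap (ContinuousLinearMap.id ℂ X0)
      = ((E : (Yt × Y0) →L[ℂ] (Xt × X0)).comp
          (S.prodMap (ContinuousLinearMap.id ℂ Y0))).comp
            (F : (X × X0) →L[ℂ] (Y × Y0))) :
    ((∃ T' : Xt →L[ℂ] X, T'.comp T = ContinuousLinearMap.id ℂ X ∧
        T.comp T' = ContinuousLinearMap.id ℂ Xt) ↔
      (∃ S' : Yt →L[ℂ] Y, S'.comp S = ContinuousLinearMap.id ℂ Y ∧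
        S.comp S' = ContinuousLinearMap.id ℂ Yt)) ∧
    (IsFredholmOp T ↔ IsFredholmOp S) ∧
    (IsFredholmOp T → fredholmIndex T = fredholmIndex S) := by
  have hLin : (T : X →ₗ[ℂ] Xt).prodMap LinearMap.id =
      (E.toLinearEquiv : Yt × Y0 →ₗ[ℂ] Xt × X0) ∘ₗ (S : Y →ₗ[ℂ] Yt).prodMap LinearMap.id ∘ₗ
        (F.toLinearEquiv : X × X0 →ₗ[ℂ] Y × Y0) :=
    congrArg ContinuousLinearMap.toLinearMap heq
  have hFun : Prod.map T id = E ∘ Prod.map S id ∘ F := congrArg DFunLike.coe heq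
  let eKer := LinearMap.kerEquivOfProdMapIdEq _ _ hLin
  let eCoker := LinearMap.quotRangeEquivOfProdMapIdEq _ _ hLin
  have hClosed := isClosed_range_iff_of_prodMap_id_eq E.toHomeomorph F.toEquiv hFun
  refine ⟨?_, isFredholmOp_iff_of_linearEquiv eKer eCoker hClosed,
    fun _ ↦ fredholmIndex_eq_of_linearEquiv eKer eCoker⟩
  rw [← ContinuousLinearMap.isInvertible_iff_exists_inverse,
    ← ContinuousLinearMap.isInvertible_iff_exists_inverse,
    ← ContinuousLinearMap.isInvertible_prodMap_id_iff (P := X0), heq,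
    ContinuousLinearMap.isInvertible_comp_equiv, ContinuousLinearMap.isInvertible_equiv_comp,
    ContinuousLinearMap.isInvertible_prodMap_id_iff]

/-- If T and S are equivalent after extension, then T is invertible iff S is
invertible, and T is Fredholm iff S is Fredholm, in which case they have the same index. -/
theorem statement14
    {X Xt Y Yt X0 Y0 : Type*}
    [NormedAddCommGroup X] [NormedSpace ℂ X] [CompleteSpace X]
    [NormedAddCommGroup Xt] [NormedSpace ℂ Xt] [CompleteSpace Xt]
    [NormedAddCommGroup Y] [NormedSpace ℂ Y] [CompleteSpace Y]
    [NormedAddCommGroup Yt] [NormedSpace ℂ Yt] [CompleteSpace Yt]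
    [NormedAddCommGroup X0] [NormedSpace ℂ X0] [CompleteSpace X0]
    [NormedAddCommGroup Y0] [NormedSpace ℂ Y0] [CompleteSpace Y0]
    (T : X →L[ℂ] Xt) (S : Y →L[ℂ] Yt)
    (E : (Yt × Y0) ≃L[ℂ] (Xt × X0)) (F : (X × X0) ≃L[ℂ] (Y × Y0))
    (heq : T.prodMap (ContinuousLinearMap.id ℂ X0)
      = ((E : (Yt × Y0) →L[ℂ] (Xt × X0)).comp
          (S.prodMap (ContinuousLinearMap.id ℂ Y0))).comp
            (F : (X × X0) →L[ℂ] (Y × Y0))) :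
    ((∃ T' : Xt →L[ℂ] X, T'.comp T = ContinuousLinearMap.id ℂ X ∧
        T.comp T' = ContinuousLinearMap.id ℂ Xt) ↔
      (∃ S' : Yt →L[ℂ] Y, S'.comp S = ContinuousLinearMap.id ℂ Y ∧
        S.comp S' = ContinuousLinearMap.id ℂ Yt)) ∧
    (IsFredholmOp T ↔ IsFredholmOp S) ∧
    (IsFredholmOp T → fredholmIndex T = fredholmIndex S) :=
  statement14_general T S E F heq
end
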